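/- If G is a graph with an edge, then for every edge e of G, γ_g'(G−e) ≥ 2; moreover if γ_g'(G) = 3 then γ_g'(G−e) ≥ 3. -/

import Mathlib

open Classical

noncomputable section

namespace DomGame

variable {V : Type*} [Fintype V]

/-- Closed neighborhood of `v` as a `Finset`. -/
noncomputable def N (G : SimpleGraph V) (v : V) : Finset V :=
  Finset.univ.filter (fun u => G.Adj v u ∨ u = v)

/-- Legal moves given the set `S` of already dominated vertices. -/
noncomputable def moves (G : SimpleGraph V) (S : Finset V) : Finset V :=
  Finset.univ.filter (fun v => ¬ N G v ⊆ S)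

lemma card_lt {G : SimpleGraph V} {S : Finset V} (v : V) (hv : v ∈ moves G S) :
    (Finset.univ \ (S ∪ N G v)).card < (Finset.univ \ S).card := by
  simp only [moves, Finset.mem_filter] at hv
  obtain ⟨u, hu, hus⟩ := Finset.not_subset.mp hv.2
  apply Finset.card_lt_card
  refine ⟨Finset.sdiff_subset_sdiff (le_refl _) Finset.subset_union_left, ?_⟩
  intro hsub
  have := hsub (Finset.mem_sdiff.mpr ⟨Finset.mem_univ u, hus⟩)
  rw [Finset.mem_sdiff, Finset.mem_union] at this
  exact this.2 (Or.inr hu)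

mutual
/-- Number of moves with optimal play when it is Dominator's turn and
`S` is the set of already dominated vertices. -/
noncomputable def gameD (G : SimpleGraph V) (S : Finset V) : ℕ :=
  if h : (moves G S).Nonempty then
    1 + (moves G S).attach.inf' (by simpa using h)
      (fun v => gameS G (S ∪ N G v.1))
  else 0
termination_by (Finset.univ \ S).card
decreasing_by exact card_lt v.1 v.2

/-- Number of moves with optimal play when it is Staller's turn. -/
noncomputable def gameS (G : SimpleGraph V) (S : Finset V) : ℕ :=
  if h : (moves G S).Nonempty then
    1 + (moves G S).attach.sup' (by simpa using h)
      (fun v => gameD G (S ∪ N G v.1))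
  else 0
termination_by (Finset.univ \ S).card
decreasing_by exact card_lt v.1 v.2
end

/-- The (Dominator-start) game domination number. -/
noncomputable def gammaG (G : SimpleGraph V) : ℕ := gameD G ∅

/-- The Staller-start game domination number. -/
noncomputable def gammaG' (G : SimpleGraph V) : ℕ := gameS G ∅

end DomGame

/-!
Removing the edge `ab` makes `a` and `b` non-adjacent, so Staller can open on `a` and leave `b`
undominated: the game lasts at least two moves. For the second part, `γ_g' ≤ 2` is preserved
under adding edges: a graph has `γ_g' ≤ 2` iff after every opening `x` some `w` completes the
domination with `N[x] ∪ N[w] = V`, and closed neighbourhoods only grow when edges are added.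
-/

namespace DomGame

variable {V : Type*} [Fintype V] {G H : SimpleGraph V} {S T : Finset V}

lemma mem_N_self (G : SimpleGraph V) (v : V) : v ∈ N G v := by simp [N]

lemma N_mono (hle : H ≤ G) (v : V) : N H v ⊆ N G v := by
  intro u hu
  simp only [N, Finset.mem_filter, Finset.mem_univ, true_and] at hu ⊢
  exact hu.imp_left (@hle v u)

lemma mem_moves_iff {v : V} : v ∈ moves G S ↔ ¬ N G v ⊆ S := by simp [moves]

lemma mem_moves_empty (G : SimpleGraph V) (v : V) : v ∈ moves G ∅ :=
  mem_moves_iff.mpr fun h => Finset.notMem_empty v (h (mem_N_self G v))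

lemma moves_nonempty_iff : (moves G S).Nonempty ↔ S ≠ Finset.univ := by
  constructor
  · rintro ⟨v, hv⟩ rfl
    exact mem_moves_iff.mp hv (Finset.subset_univ _)
  · intro hS
    obtain ⟨u, -, hu⟩ := Finset.exists_of_ssubset (Finset.ssubset_univ_iff.mpr hS)
    exact ⟨u, mem_moves_iff.mpr fun h => hu (h (mem_N_self G u))⟩

lemma gameS_eq_zero_iff : gameS G S = 0 ↔ S = Finset.univ := by
  by_cases h : (moves G S).Nonempty
  · rw [gameS, dif_pos h]
    simpa using moves_nonempty_iff.mp h
  · rw [gameS, dif_neg h]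
    simpa [moves_nonempty_iff] using h

lemma gameD_eq_zero_iff : gameD G S = 0 ↔ S = Finset.univ := by
  by_cases h : (moves G S).Nonempty
  · rw [gameD, dif_pos h]
    simpa using moves_nonempty_iff.mp h
  · rw [gameD, dif_neg h]
    simpa [moves_nonempty_iff] using h

lemma gameD_lt_gameS {v : V} (hv : v ∈ moves G S) : gameD G (S ∪ N G v) < gameS G S := by
  rw [gameS, dif_pos ⟨v, hv⟩, Nat.one_add, Nat.lt_succ_iff]
  exact Finset.le_sup' (fun w : moves G S => gameD G (S ∪ N G w.1)) (Finset.mem_attach _ ⟨v, hv⟩)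

lemma gameS_le_succ {k : ℕ} (h : ∀ v ∈ moves G S, gameD G (S ∪ N G v) ≤ k) :
    gameS G S ≤ k + 1 := by
  unfold gameS
  split_ifs
  · rw [Nat.add_comm 1]
    exact Nat.succ_le_succ (Finset.sup'_le _ _ fun v _ => h v.1 v.2)
  · exact Nat.zero_le _

lemma gameD_le_succ {w : V} (hw : w ∈ moves G S) : gameD G S ≤ gameS G (S ∪ N G w) + 1 := by
  rw [gameD, dif_pos ⟨w, hw⟩, Nat.add_comm 1]
  exact Nat.succ_le_succ
    (Finset.inf'_le (fun u : moves G S => gameS G (S ∪ N G u.1)) (Finset.mem_attach _ ⟨w, hw⟩))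

lemma gameD_N_lt_gammaG' (G : SimpleGraph V) (v : V) : gameD G (N G v) < gammaG' G := by
  simpa [gammaG'] using gameD_lt_gameS (mem_moves_empty G v)

lemma exists_gameD_eq (h : (moves G S).Nonempty) :
    ∃ w ∈ moves G S, gameD G S = gameS G (S ∪ N G w) + 1 := by
  rw [gameD, dif_pos h]
  obtain ⟨w, -, hw⟩ := Finset.exists_mem_eq_inf' (Finset.attach_nonempty_iff.mpr h)
    (fun u : moves G S => gameS G (S ∪ N G u.1))
  exact ⟨w.1, w.2, by rw [hw, Nat.add_comm]⟩

lemma gameD_le_one_iff [Nonempty V] :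
    gameD G S ≤ 1 ↔ ∃ w, S ∪ N G w = Finset.univ := by
  constructor
  · intro h
    by_cases hS : S = Finset.univ
    · exact ⟨Classical.arbitrary V, by simp [hS]⟩
    obtain ⟨w, -, hw⟩ := exists_gameD_eq (moves_nonempty_iff (G := G) |>.mpr hS)
    exact ⟨w, (gameS_eq_zero_iff (G := G)).mp (by omega)⟩
  · rintro ⟨w, hw⟩
    by_cases hwm : w ∈ moves G S
    · have := gameD_le_succ hwm
      rw [gameS_eq_zero_iff.mpr hw] at this
      exact this
    · rw [mem_moves_iff, not_not] at hwm
      rw [Finset.union_eq_left.mpr hwm] at hw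
      exact (gameD_eq_zero_iff.mpr hw).trans_le zero_le_one

lemma gameD_le_one_mono [Nonempty V] (hle : H ≤ G) (hST : S ⊆ T) (h : gameD H S ≤ 1) :
    gameD G T ≤ 1 := by
  obtain ⟨w, hw⟩ := gameD_le_one_iff.mp h
  refine gameD_le_one_iff.mpr ⟨w, Finset.eq_univ_of_forall fun u => ?_⟩
  exact Finset.union_subset_union hST (N_mono hle w) (hw ▸ Finset.mem_univ u)

lemma gammaG'_le_two_mono (hle : H ≤ G) (h : gammaG' H ≤ 2) : gammaG' G ≤ 2 := by
  refine gameS_le_succ fun x _ => ?_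
  have : Nonempty V := ⟨x⟩
  rw [Finset.empty_union]
  exact gameD_le_one_mono hle (N_mono hle x) (by have := gameD_N_lt_gammaG' H x; omega)

lemma two_le_gammaG'_of_not_adj {a b : V} (hab : a ≠ b) (h : ¬ H.Adj a b) : 2 ≤ gammaG' H := by
  have hb : b ∉ N H a := by simp [N, h, hab.symm]
  have hD : gameD H (N H a) ≠ 0 := fun h0 =>
    hb (gameD_eq_zero_iff.mp h0 ▸ Finset.mem_univ b)
  have := gameD_N_lt_gammaG' H a
  omega

end DomGame

open DomGame in
/-- If `G` has an edge, then `γ_g'(G−e) ≥ 2` for every edge `e`;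
moreover if `γ_g'(G) = 3` then `γ_g'(G−e) ≥ 3`. -/
theorem gameS_edge_removal_lower {V : Type*} [Fintype V] (G : SimpleGraph V)
    (hG : G.edgeSet.Nonempty) (e : Sym2 V) (he : e ∈ G.edgeSet) :
    2 ≤ gammaG' (G.deleteEdges {e}) ∧
    (gammaG' G = 3 → 3 ≤ gammaG' (G.deleteEdges {e})) := by
  induction e using Sym2.ind with
  | _ a b =>
  refine ⟨two_le_gammaG'_of_not_adj (G.mem_edgeSet.mp he).ne (by simp), fun h3 => ?_⟩
  by_contra! hlt
  have := gammaG'_le_two_mono (G.deleteEdges_le {s(a, b)}) (by omega)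
  omega
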